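/- Let T and S be 2-uniform tolerances on a poset P (|P| > 2) containing no infinite chain. If T and S are amicable (conditions (5)–(8)), then T and S permute: T∘S = S∘T. -/
import Mathlib


variable {P : Type*} [PartialOrder P]

/-- A tolerance on a poset: reflexive, symmetric, compatible with existing binary
joins and meets, and satisfying the two interpolation conditions (3) and (4). -/
def PosetTolerance (T : P → P → Prop) : Prop :=
  (∀ x, T x x) ∧ (∀ x y, T x y → T y x) ∧
  (∀ ⦃x y z u j k : P⦄, T x y → T z u → IsLUB {x, z} j → IsLUB {y, u} k → T j k) ∧
  (∀ ⦃x y z u j k : P⦄, T x y → T z u → IsGLB {x, z} j → IsGLB {y, u} k → T j k) ∧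
  ((∃ a b, ¬ T a b) → ∀ ⦃x y z : P⦄, T x y → T y z →
    ∃ u v, u ≤ x ∧ u ≤ y ∧ u ≤ z ∧ x ≤ v ∧ y ≤ v ∧ z ≤ v ∧ T u y ∧ T y v) ∧
  ((∃ a b, ¬ T a b) → ∀ ⦃x y : P⦄, T x y →
    ∃ z u, T z u ∧ z ≤ x ∧ z ≤ y ∧ x ≤ u ∧ y ≤ u ∧
      ∀ v, T v x → T v y → T v z ∧ T v u)

/-- A block of `T`: a maximal subset `B` with `B × B ⊆ T`. -/
def IsBlock (T : P → P → Prop) (B : Set P) : Prop :=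
  (∀ x ∈ B, ∀ y ∈ B, T x y) ∧ ∀ C : Set P, B ⊆ C → (∀ x ∈ C, ∀ y ∈ C, T x y) → C = B

/-- A 2-uniform tolerance: a tolerance all of whose blocks have exactly two elements. -/
def TwoUniform (T : P → P → Prop) : Prop :=
  PosetTolerance T ∧ ∀ B : Set P, IsBlock T B → ∃ a b : P, a ≠ b ∧ B = {a, b}

/-- `a` is a lower `T`-neighbor of `b` (and `b` an upper `T`-neighbor of `a`). -/
def LowerNbr (T : P → P → Prop) (a b : P) : Prop := a ⋖ b ∧ T a b

/-- A `(T,S)`-top: an element with a lower `T`-neighbor and a lower `S`-neighbor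
(equivalently, split or adherent `(T,S)`-top). -/
def TSTop (T S : P → P → Prop) (a : P) : Prop :=
  (∃ b, LowerNbr T b a) ∧ ∃ c, LowerNbr S c a

/-- A `(T,S)`-bottom, dually. -/
def TSBottom (T S : P → P → Prop) (a : P) : Prop :=
  (∃ b, LowerNbr T a b) ∧ ∃ c, LowerNbr S a c

/-- `T` and `S` permute: `T ∘ S = S ∘ T`. -/
def Permute (T S : P → P → Prop) : Prop :=
  ∀ a b : P, (∃ c, T a c ∧ S c b) ↔ (∃ c, S a c ∧ T c b)

/-- Conditions (5)–(8): `T` and `S` are amicable. -/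
def Amicable (T S : P → P → Prop) : Prop :=
  (∀ a b : P, a ≠ b → (∃ c, LowerNbr T c a ∧ LowerNbr S c b) →
    ∃ d, LowerNbr S a d ∧ LowerNbr T b d) ∧
  (∀ a b : P, a ≠ b → (∃ c, LowerNbr T a c ∧ LowerNbr S b c) →
    ∃ d, LowerNbr S d a ∧ LowerNbr T d b) ∧
  (∀ a b : P, TSTop T S a → (LowerNbr T a b ∨ LowerNbr S a b) → TSTop T S b) ∧
  (∀ a b : P, TSBottom T S a → (LowerNbr T b a ∨ LowerNbr S b a) → TSBottom T S b)

section AuxProof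

-- helpers start here

lemma isLUB_pair_ge {c x : P} (h : x ≤ c) : IsLUB ({c, x} : Set P) c := by
  constructor
  · rintro z (rfl | rfl)
    · exact le_rfl
    · exact h
  · intro u hu
    exact hu (by simp)

lemma isGLB_pair_ge {c x : P} (h : x ≤ c) : IsGLB ({c, x} : Set P) x := by
  constructor
  · rintro z (rfl | rfl)
    · exact h
    · exact le_rfl
  · intro u hu
    exact hu (by simp)

lemma isLUB_pair_le {c q : P} (h : c ≤ q) : IsLUB ({c, q} : Set P) q := by
  constructor
  · rintro z (rfl | rfl)
    · exact h
    · exact le_rfl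
  · intro u hu
    exact hu (by simp)

lemma isGLB_pair_le {c q : P} (h : c ≤ q) : IsGLB ({c, q} : Set P) c := by
  constructor
  · rintro z (rfl | rfl)
    · exact le_rfl
    · exact h
  · intro u hu
    exact hu (by simp)

lemma exists_block_superset {T : P → P → Prop} (hT : TwoUniform T) {C : Set P}
    (hC : ∀ x ∈ C, ∀ y ∈ C, T x y) :
    ∃ a b : P, a ≠ b ∧ C ⊆ {a, b} ∧ IsBlock T {a, b} := by
  obtain ⟨m, hCm, hmax⟩ := zorn_subset_nonempty {D : Set P | ∀ x ∈ D, ∀ y ∈ D, T x y}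
    (fun c hcS hchain hcne => by
      refine ⟨⋃₀ c, ?_, fun s hs => Set.subset_sUnion_of_mem hs⟩
      rintro x ⟨D1, hD1, hxD1⟩ y ⟨D2, hD2, hyD2⟩
      rcases eq_or_ne D1 D2 with rfl | hne
      · exact hcS hD1 x hxD1 y hyD2
      · rcases hchain hD1 hD2 hne with h | h
        · exact hcS hD2 x (h hxD1) y hyD2
        · exact hcS hD1 x hxD1 y (h hyD2)) C hC
  have hblock : IsBlock T m := by
    refine ⟨hmax.1, fun D hmD hD => ?_⟩
    exact le_antisymm (hmax.2 hD hmD) hmD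
  obtain ⟨a, b, hab, rfl⟩ := hT.2 m hblock
  exact ⟨a, b, hab, hCm, hblock⟩

lemma exists_nbr {T : P → P → Prop} (hT : TwoUniform T) (x : P) : ∃ y, y ≠ x ∧ T x y := by
  obtain ⟨a, b, hab, hsub, hblk⟩ := exists_block_superset hT
    (C := {x}) (by rintro p rfl q rfl; exact hT.1.1 _)
  have hx : x ∈ ({a, b} : Set P) := hsub rfl
  rcases hx with rfl | rfl
  · exact ⟨b, fun h => hab h.symm, hblk.1 x (by simp) b (by simp)⟩
  · exact ⟨a, hab.symm ∘ Eq.symm ∘ Eq.symm ∘ id ∘ Eq.symm, hblk.1 x (by simp) a (by simp)⟩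

lemma exists_not_rel {T : P → P → Prop} (hT : TwoUniform T)
    (hP : ∃ x y z : P, x ≠ y ∧ x ≠ z ∧ y ≠ z) : ∃ a b, ¬ T a b := by
  obtain ⟨x, y, z, hxy, hxz, hyz⟩ := hP
  obtain ⟨a, b, hab, hsub, hblk⟩ := exists_block_superset hT
    (C := {x}) (by rintro p rfl q rfl; exact hT.1.1 _)
  -- find one of x,y,z not in {a,b}
  have : ∃ w : P, w ∉ ({a, b} : Set P) := by
    by_contra h
    push_neg at h
    have hx := h x; have hy := h y; have hz := h z
    rcases hx with rfl | rfl <;> rcases hy with rfl | rfl <;> rcases hz with rfl | rfl <;>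
      simp_all
  obtain ⟨w, hw⟩ := this
  by_contra h
  push_neg at h
  have : ({a, b} ∪ {w} : Set P) = {a, b} := by
    refine hblk.2 _ (Set.subset_union_left) ?_
    intro p _ q _
    exact h p q
  exact hw (this ▸ Set.mem_union_right _ rfl)

lemma no_triangle {T : P → P → Prop} (hT : TwoUniform T) {x y z : P}
    (hxy : T x y) (hyz : T y z) (hxz : T x z)
    (h1 : x ≠ y) (h2 : y ≠ z) (h3 : x ≠ z) : False := by
  have hsym := hT.1.2.1
  have hrefl := hT.1.1
  obtain ⟨a, b, hab, hsub, _⟩ := exists_block_superset hT (C := {x, y, z})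
    (by
      rintro p (rfl | rfl | rfl) q (rfl | rfl | rfl) <;>
        first
          | exact hrefl _
          | exact hxy | exact hyz | exact hxz
          | exact hsym _ _ hxy | exact hsym _ _ hyz | exact hsym _ _ hxz)
  have hx : x ∈ ({a, b} : Set P) := hsub (by simp)
  have hy : y ∈ ({a, b} : Set P) := hsub (by simp)
  have hz : z ∈ ({a, b} : Set P) := hsub (by simp)
  rcases hx with rfl | rfl <;> rcases hy with rfl | rfl <;> rcases hz with rfl | rfl <;> simp_all

lemma cov_or_cov {T : P → P → Prop} (hT : TwoUniform T) (hne : ∃ a b, ¬ T a b)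
    {x y : P} (hxy : T x y) (h : x ≠ y) : x ⋖ y ∨ y ⋖ x := by
  have hrefl := hT.1.1
  have hsym := hT.1.2.1
  have hjoin := hT.1.2.2.1
  have hmeet := hT.1.2.2.2.1
  -- comparability
  have hcomp : x ≤ y ∨ y ≤ x := by
    by_contra hc
    push_neg at hc
    obtain ⟨hxley, hylex⟩ := hc
    obtain ⟨z, u, hTzu, hzx, hzy, hxu, hyu, hv⟩ := hT.1.2.2.2.2.2 hne hxy
    obtain ⟨hTxz, hTxu⟩ := hv x (hrefl x) hxy
    have hzx' : z ≠ x := fun hzx' => hxley (hzx' ▸ hzy)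
    have hxu' : x ≠ u := fun hxu' => hylex (hxu' ▸ hyu)
    have hzu' : z ≠ u := fun hzu' => hzx' (le_antisymm hzx (hzu' ▸ hxu))
    exact no_triangle hT hTxz hTzu hTxu (Ne.symm hzx') hzu' hxu'
  -- covering, given strict inequality
  have key : ∀ p q : P, T p q → p < q → p ⋖ q := by
    intro p q hpq hlt
    refine ⟨hlt, fun c hpc hcq => ?_⟩
    have h1 : T c q := hjoin (hrefl c) hpq (isLUB_pair_ge hpc.le) (isLUB_pair_le hcq.le)
    have h2 : T p c := hmeet (hrefl c) hpq (isGLB_pair_ge hpc.le) (isGLB_pair_le hcq.le)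
    exact no_triangle hT h2 h1 hpq hpc.ne hcq.ne hlt.ne
  rcases hcomp with hle | hle
  · exact Or.inl (key x y hxy (lt_of_le_of_ne hle h))
  · exact Or.inr (key y x (hsym _ _ hxy) (lt_of_le_of_ne hle (Ne.symm h)))

/-- uniqueness of upper neighbors -/
lemma unique_upper {T : P → P → Prop} (hT : TwoUniform T) (hne : ∃ a b, ¬ T a b)
    {z x y : P} (hx : LowerNbr T z x) (hy : LowerNbr T z y) : x = y := by
  have hsym := hT.1.2.1
  obtain ⟨u, v, _, _, _, hxv, hzv, hyv, _, hTzv⟩ :=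
    hT.1.2.2.2.2.1 hne (hsym _ _ hx.2) hy.2
  have hzltv : z < v := lt_of_lt_of_le hx.1.lt hxv
  have hcov : z ⋖ v := by
    rcases cov_or_cov hT hne hTzv hzltv.ne with h | h
    · exact h
    · exact absurd h.lt (not_lt_of_gt hzltv)
  have hxveq : x = v := by
    rcases lt_or_eq_of_le hxv with hlt | heq
    · exact absurd hlt (hcov.2 hx.1.lt)
    · exact heq
  have hyveq : y = v := by
    rcases lt_or_eq_of_le hyv with hlt | heq
    · exact absurd hlt (hcov.2 hy.1.lt)
    · exact heq
  rw [hxveq, hyveq]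

/-- uniqueness of lower neighbors -/
lemma unique_lower {T : P → P → Prop} (hT : TwoUniform T) (hne : ∃ a b, ¬ T a b)
    {z x y : P} (hx : LowerNbr T x z) (hy : LowerNbr T y z) : x = y := by
  have hsym := hT.1.2.1
  obtain ⟨u, v, hux, huz, huy, _, _, _, hTuz, _⟩ :=
    hT.1.2.2.2.2.1 hne hx.2 (hsym _ _ hy.2)
  have hultz : u < z := lt_of_le_of_lt hux hx.1.lt
  have hcov : u ⋖ z := by
    rcases cov_or_cov hT hne hTuz hultz.ne with h | h
    · exact h
    · exact absurd h.lt (not_lt_of_gt hultz)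
  have hxueq : u = x := by
    rcases lt_or_eq_of_le hux with hlt | heq
    · exact absurd hx.1.lt (hcov.2 hlt)
    · exact heq
  have hyueq : u = y := by
    rcases lt_or_eq_of_le huy with hlt | heq
    · exact absurd hy.1.lt (hcov.2 hlt)
    · exact heq
  rw [← hxueq, ← hyueq]


lemma amicable_symm {T S : P → P → Prop} (h : Amicable T S) : Amicable S T := by
  obtain ⟨h5, h6, h7, h8⟩ := h
  refine ⟨?_, ?_, ?_, ?_⟩
  · intro a b hab ⟨c, hca, hcb⟩
    obtain ⟨d, hd1, hd2⟩ := h5 b a (Ne.symm hab) ⟨c, hcb, hca⟩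
    exact ⟨d, hd2, hd1⟩
  · intro a b hab ⟨c, hca, hcb⟩
    obtain ⟨d, hd1, hd2⟩ := h6 b a (Ne.symm hab) ⟨c, hcb, hca⟩
    exact ⟨d, hd2, hd1⟩
  · intro a b ⟨h1, h2⟩ hor
    obtain ⟨hb1, hb2⟩ := h7 a b ⟨h2, h1⟩ hor.symm
    exact ⟨hb2, hb1⟩
  · intro a b ⟨h1, h2⟩ hor
    obtain ⟨hb1, hb2⟩ := h8 a b ⟨h2, h1⟩ hor.symm
    exact ⟨hb2, hb1⟩

lemma wf_lt_of_chains (hchain : ∀ C : Set P, IsChain (· ≤ ·) C → C.Finite) :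
    WellFounded ((· < ·) : P → P → Prop) := by
  rw [RelEmbedding.wellFounded_iff_isEmpty]
  constructor
  intro f
  have hanti : StrictAnti f := fun m n h => f.map_rel_iff.2 h
  have hch : IsChain (· ≤ ·) (Set.range f) := by
    rintro _ ⟨m, rfl⟩ _ ⟨n, rfl⟩ _
    rcases le_total m n with h | h
    · exact Or.inr (hanti.antitone h)
    · exact Or.inl (hanti.antitone h)
  exact Set.infinite_range_of_injective hanti.injective (hchain _ hch)

lemma wf_gt_of_chains (hchain : ∀ C : Set P, IsChain (· ≤ ·) C → C.Finite) :
    WellFounded ((· > ·) : P → P → Prop) := by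
  rw [RelEmbedding.wellFounded_iff_isEmpty]
  constructor
  intro f
  have hmono : StrictMono f := fun m n h => f.map_rel_iff.2 h
  have hch : IsChain (· ≤ ·) (Set.range f) := by
    rintro _ ⟨m, rfl⟩ _ ⟨n, rfl⟩ _
    rcases le_total m n with h | h
    · exact Or.inl (hmono.monotone h)
    · exact Or.inr (hmono.monotone h)
  exact Set.infinite_range_of_injective hmono.injective (hchain _ hch)

lemma ascend (hwf : WellFounded ((· < ·) : P → P → Prop))
    (hP : ∃ x y z : P, x ≠ y ∧ x ≠ z ∧ y ≠ z) (c : P) :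
    ∀ T S : P → P → Prop, TwoUniform T → TwoUniform S → Amicable T S →
      ∀ a b, LowerNbr T a c → LowerNbr S c b → ∃ d, LowerNbr S a d ∧ LowerNbr T d b := by
  refine WellFounded.induction hwf
    (C := fun c => ∀ T S : P → P → Prop, TwoUniform T → TwoUniform S → Amicable T S →
      ∀ a b, LowerNbr T a c → LowerNbr S c b → ∃ d, LowerNbr S a d ∧ LowerNbr T d b)
    c ?_
  intro c IH T S hT hS hamic a b hac hcb
  obtain ⟨h5, h6, h7, h8⟩ := hamic
  have hneT : ∃ a b, ¬ T a b := exists_not_rel hT hP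
  have hneS : ∃ a b, ¬ S a b := exists_not_rel hS hP
  have hSsym := hS.1.2.1
  have hTsym := hT.1.2.1
  -- Claim 1 : a has an upper S-neighbor
  have claim1 : ∃ s, LowerNbr S a s := by
    obtain ⟨y, hyne, hSay⟩ := exists_nbr hS a
    rcases cov_or_cov hS hneS hSay (Ne.symm hyne) with hcov | hcov
    · exact ⟨y, hcov, hSay⟩
    · -- y ⋖_S a ; recursive call at middle a
      obtain ⟨w, hfw, hwc⟩ := IH a hac.1.lt S T hS hT (amicable_symm ⟨h5, h6, h7, h8⟩)
        y c ⟨hcov, hSsym _ _ hSay⟩ hac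
      -- hfw : LowerNbr T y w, hwc : LowerNbr S w c
      have htopc : TSTop T S c := ⟨⟨a, hac⟩, ⟨w, hwc⟩⟩
      have htopb : TSTop T S b := h7 c b htopc (Or.inr hcb)
      obtain ⟨⟨e, heb⟩, -⟩ := htopb
      by_cases hec : e = c
      · have hbotc : TSBottom T S c := ⟨⟨b, hec ▸ heb⟩, ⟨b, hcb⟩⟩
        have hbota : TSBottom T S a := h8 c a hbotc (Or.inl hac)
        exact hbota.2
      · obtain ⟨p, hpe, hpc⟩ := h6 e c hec ⟨b, heb, hcb⟩
        have hpa : p = a := unique_lower hT hneT hpc hac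
        exact ⟨e, hpa ▸ hpe⟩
  obtain ⟨s, has⟩ := claim1
  by_cases hsc : s = c
  · -- a ⋖_S c
    subst hsc
    have htops : TSTop T S s := ⟨⟨a, hac⟩, ⟨a, has⟩⟩
    have htopb : TSTop T S b := h7 s b htops (Or.inr hcb)
    obtain ⟨⟨e, heb⟩, -⟩ := htopb
    by_cases hec : e = s
    · exact ⟨s, has, hec ▸ heb⟩
    · obtain ⟨p, hpe, hps⟩ := h6 e s hec ⟨b, heb, hcb⟩
      have hpa : p = a := unique_lower hT hneT hps hac
      subst hpa
      exact absurd (unique_upper hS hneS hpe has) hec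
  · -- s ≠ c : use (5)
    obtain ⟨g, hcg, hsg⟩ := h5 c s (fun h => hsc h.symm) ⟨a, hac, has⟩
    have hgb : g = b := unique_upper hS hneS hcg hcb
    exact ⟨s, has, hgb ▸ hsg⟩

lemma descend (hwf : WellFounded ((· > ·) : P → P → Prop))
    (hP : ∃ x y z : P, x ≠ y ∧ x ≠ z ∧ y ≠ z) (c : P) :
    ∀ T S : P → P → Prop, TwoUniform T → TwoUniform S → Amicable T S →
      ∀ a b, LowerNbr T c a → LowerNbr S b c → ∃ d, LowerNbr S d a ∧ LowerNbr T b d := by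
  refine WellFounded.induction hwf
    (C := fun c => ∀ T S : P → P → Prop, TwoUniform T → TwoUniform S → Amicable T S →
      ∀ a b, LowerNbr T c a → LowerNbr S b c → ∃ d, LowerNbr S d a ∧ LowerNbr T b d)
    c ?_
  intro c IH T S hT hS hamic a b hca hbc
  obtain ⟨h5, h6, h7, h8⟩ := hamic
  have hneT : ∃ a b, ¬ T a b := exists_not_rel hT hP
  have hneS : ∃ a b, ¬ S a b := exists_not_rel hS hP
  have hSsym := hS.1.2.1
  have hTsym := hT.1.2.1
  -- Claim 1' : a has a lower S-neighbor
  have claim1 : ∃ s, LowerNbr S s a := by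
    obtain ⟨y, hyne, hSay⟩ := exists_nbr hS a
    rcases cov_or_cov hS hneS hSay (Ne.symm hyne) with hcov | hcov
    · -- a ⋖_S y ; recursive call at middle a
      obtain ⟨w, hwy, hcw⟩ := IH a hca.1.lt S T hS hT (amicable_symm ⟨h5, h6, h7, h8⟩)
        y c ⟨hcov, hSay⟩ hca
      -- hwy : LowerNbr T w y, hcw : LowerNbr S c w
      have hbotc : TSBottom T S c := ⟨⟨a, hca⟩, ⟨w, hcw⟩⟩
      have hbotb : TSBottom T S b := h8 c b hbotc (Or.inr hbc)
      obtain ⟨⟨e, hbe⟩, -⟩ := hbotb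
      by_cases hec : e = c
      · have htopc : TSTop T S c := ⟨⟨b, hec ▸ hbe⟩, ⟨b, hbc⟩⟩
        have htopa : TSTop T S a := h7 c a htopc (Or.inl hca)
        exact htopa.2
      · obtain ⟨p, hep, hcp⟩ := h5 e c hec ⟨b, hbe, hbc⟩
        have hpa : p = a := unique_upper hT hneT hcp hca
        exact ⟨e, hpa ▸ hep⟩
    · exact ⟨y, hcov, hSsym _ _ hSay⟩
  obtain ⟨s, hsa⟩ := claim1
  by_cases hsc : s = c
  · -- c ⋖_S a
    subst hsc
    have hbots : TSBottom T S s := ⟨⟨a, hca⟩, ⟨a, hsa⟩⟩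
    have hbotb : TSBottom T S b := h8 s b hbots (Or.inr hbc)
    obtain ⟨⟨e, hbe⟩, -⟩ := hbotb
    by_cases hec : e = s
    · exact ⟨s, hsa, hec ▸ hbe⟩
    · obtain ⟨p, hep, hsp⟩ := h5 e s hec ⟨b, hbe, hbc⟩
      have hpa : p = a := unique_upper hT hneT hsp hca
      subst hpa
      exact absurd (unique_lower hS hneS hep hsa) hec
  · -- s ≠ c : use (6)
    obtain ⟨g, hgc, hgs⟩ := h6 c s (fun h => hsc h.symm) ⟨a, hca, hsa⟩
    have hgb : g = b := unique_lower hS hneS hgc hbc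
    exact ⟨s, hsa, hgb ▸ hgs⟩


lemma one_dir {T S : P → P → Prop}
    (hP : ∃ x y z : P, x ≠ y ∧ x ≠ z ∧ y ≠ z)
    (hchain : ∀ C : Set P, IsChain (· ≤ ·) C → C.Finite)
    (hT : TwoUniform T) (hS : TwoUniform S) (hamic : Amicable T S)
    {a b : P} (h : ∃ c, T a c ∧ S c b) : ∃ c, S a c ∧ T c b := by
  obtain ⟨c, hTac, hScb⟩ := h
  have hTsym := hT.1.2.1
  have hSsym := hS.1.2.1
  have hneT : ∃ a b, ¬ T a b := exists_not_rel hT hP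
  have hneS : ∃ a b, ¬ S a b := exists_not_rel hS hP
  by_cases hac : a = c
  · exact ⟨b, hac ▸ hScb, hT.1.1 b⟩
  by_cases hcb : c = b
  · exact ⟨a, hS.1.1 a, hcb ▸ hTac⟩
  rcases cov_or_cov hT hneT hTac hac with hc1 | hc1 <;>
    rcases cov_or_cov hS hneS hScb hcb with hc2 | hc2
  · -- a ⋖ c, c ⋖ b : ascend
    obtain ⟨d, had, hdb⟩ := ascend (wf_lt_of_chains hchain) hP c T S hT hS hamic a b
      ⟨hc1, hTac⟩ ⟨hc2, hScb⟩
    exact ⟨d, had.2, hdb.2⟩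
  · -- a ⋖ c, b ⋖ c : (6)
    by_cases hab : a = b
    · exact ⟨a, hS.1.1 a, hab ▸ hT.1.1 a⟩
    · obtain ⟨d, hda, hdb⟩ := hamic.2.1 a b hab ⟨c, ⟨hc1, hTac⟩, ⟨hc2, hSsym _ _ hScb⟩⟩
      exact ⟨d, hSsym _ _ hda.2, hdb.2⟩
  · -- c ⋖ a, c ⋖ b : (5)
    by_cases hab : a = b
    · exact ⟨c, hab ▸ hSsym _ _ hScb, hab ▸ (hTsym _ _ hTac)⟩
    · obtain ⟨d, had, hbd⟩ := hamic.1 a b hab ⟨c, ⟨hc1, hTsym _ _ hTac⟩, ⟨hc2, hScb⟩⟩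
      exact ⟨d, had.2, hTsym _ _ hbd.2⟩
  · -- c ⋖ a, b ⋖ c : descend
    obtain ⟨d, hda, hbd⟩ := descend (wf_gt_of_chains hchain) hP c T S hT hS hamic a b
      ⟨hc1, hTsym _ _ hTac⟩ ⟨hc2, hSsym _ _ hScb⟩
    exact ⟨d, hSsym _ _ hda.2, hTsym _ _ hbd.2⟩


end AuxProof

/-- Amicable 2-uniform tolerances on a poset without infinite chains permute. -/
theorem stmt_7 {P : Type*} [PartialOrder P] (T S : P → P → Prop)
    (hP : ∃ x y z : P, x ≠ y ∧ x ≠ z ∧ y ≠ z)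
    (hchain : ∀ C : Set P, IsChain (· ≤ ·) C → C.Finite)
    (hT : TwoUniform T) (hS : TwoUniform S) (hamic : Amicable T S) :
    Permute T S := by
  intro a b
  constructor
  · exact one_dir hP hchain hT hS hamic
  · exact one_dir hP hchain hS hT (amicable_symm hamic)
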